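/- There is a constant C such that for all positive integers n, n₁, n₂, n₃, the correlation integral c(n,n₁,n₂,n₃) = ∫_B e_n(x) e_{n₁}(x) e_{n₂}(x) e_{n₃}(x) dx satisfies |c(n,n₁,n₂,n₃)| ≤ C · min{n, n₁, n₂, n₃}. -/

import Mathlib

/-!
In polar coordinates the correlation integral is `3 |B| ∫₀¹ sin(ay) sin(by) sin(cy) sin(dy) / y² dy`
with `(a, b, c, d) = (nπ, n₁π, n₂π, n₃π)`. Product-to-sum turns the integrand into one eighth of
the alternating sum, over the eight frequencies `L = a ± b ± c ± d`, of `(cos(Ly) - 1) / y²` (the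
constants cancel because four signs are `+` and four are `-`). The substitution `u = |L| y` shows
`∫₀¹ (cos(Ly) - 1) / y² dy = κ |L| + O(1)` with `κ = ∫₀^∞ (cos u - 1) / u² du`, so everything
reduces to the alternating sum of `|a ± b ± c ± d|`. Pairing the terms that differ only in the
sign in front of one variable `v` bounds that sum by `8 |v|`, hence by `8 min(a, b, c, d)`.
-/

open Real MeasureTheory

noncomputable abbrev E3 := EuclideanSpace ℝ (Fin 3)

/-- The open unit ball in `ℝ³`. -/
noncomputable def B3 : Set E3 := Metric.ball 0 1

open Classical in
/-- The radial eigenfunction `e_n(x) = sin(nπ|x|)/|x|`, extended by `e_n(0) = nπ`. -/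
noncomputable def eFun (n : ℕ) (x : E3) : ℝ :=
  if x = 0 then n * Real.pi else Real.sin (n * Real.pi * ‖x‖) / ‖x‖

open Set

open Metric Module in
theorem setIntegral_ball_fun_norm_addHaar {E F : Type*} [NormedAddCommGroup E] [NormedSpace ℝ E]
    [Nontrivial E] [FiniteDimensional ℝ E] [MeasurableSpace E] [BorelSpace E]
    [NormedAddCommGroup F] [NormedSpace ℝ F] (μ : Measure E) [μ.IsAddHaarMeasure]
    (f : ℝ → F) (r : ℝ) :
    ∫ x in ball 0 r, f ‖x‖ ∂μ =
      finrank ℝ E • μ.real (ball 0 1) • ∫ y in Ioo 0 r, y ^ (finrank ℝ E - 1) • f y := by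
  have hball : ∀ x : E, (ball 0 r).indicator (fun x => f ‖x‖) x = (Iio r).indicator f ‖x‖ := by
    intro x
    simp only [indicator, mem_ball_zero_iff, mem_Iio]
  have hIoo : ∀ y : ℝ, y ^ (finrank ℝ E - 1) • (Iio r).indicator f y
      = (Iio r).indicator (fun y => y ^ (finrank ℝ E - 1) • f y) y := by
    intro y
    by_cases hy : y < r <;> simp [hy]
  rw [← integral_indicator measurableSet_ball, funext hball, integral_fun_norm_addHaar,
    funext hIoo, setIntegral_indicator measurableSet_Iio, Ioi_inter_Iio]

noncomputable def cosKernel (L y : ℝ) : ℝ := (cos (L * y) - 1) / y ^ 2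

lemma measurable_cosKernel (L : ℝ) : Measurable (cosKernel L) := by
  unfold cosKernel; fun_prop

lemma abs_cosKernel_le_sq (L y : ℝ) : |cosKernel L y| ≤ L ^ 2 / 2 := by
  rcases eq_or_ne y 0 with rfl | hy
  · simp [cosKernel]; positivity
  have hcos : |cos (L * y) - 1| ≤ (L * y) ^ 2 / 2 := by
    rw [abs_sub_comm, abs_of_nonneg (by linarith [cos_le_one (L * y)])]
    linarith [one_sub_sq_div_two_le_cos (x := L * y)]
  rw [cosKernel, abs_div, abs_of_nonneg (sq_nonneg y), div_le_iff₀ (by positivity)]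
  linarith

lemma abs_cosKernel_le_rpow (L : ℝ) {y : ℝ} (hy : 0 < y) :
    |cosKernel L y| ≤ 2 * y ^ (-2 : ℝ) := by
  have hcos : |cos (L * y) - 1| ≤ 2 := by
    rw [abs_sub_comm, abs_of_nonneg (by linarith [cos_le_one (L * y)])]
    linarith [neg_one_le_cos (L * y)]
  rw [cosKernel, abs_div, abs_of_nonneg (sq_nonneg y), rpow_neg hy.le, rpow_two, ← div_eq_mul_inv]
  gcongr

lemma integrableOn_cosKernel_Ioi_one (L : ℝ) : IntegrableOn (cosKernel L) (Ioi 1) := by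
  refine ((integrableOn_Ioi_rpow_of_lt (a := -2) (by norm_num) one_pos).const_mul 2).mono'
    (measurable_cosKernel L).aestronglyMeasurable ?_
  filter_upwards [ae_restrict_mem measurableSet_Ioi] with y hy
  exact abs_cosKernel_le_rpow L (one_pos.trans hy)

lemma integrableOn_cosKernel_Ioi_zero (L : ℝ) : IntegrableOn (cosKernel L) (Ioi 0) := by
  have hIoc : IntegrableOn (cosKernel L) (Ioc 0 1) :=
    (integrableOn_const (C := L ^ 2 / 2) (by simp)).mono'
      (measurable_cosKernel L).aestronglyMeasurable (.of_forall (abs_cosKernel_le_sq L))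
  rw [← Ioc_union_Ioi_eq_Ioi zero_le_one]
  exact hIoc.union (integrableOn_cosKernel_Ioi_one L)

lemma abs_setIntegral_cosKernel_Ioi_one_le (L : ℝ) : |∫ y in Ioi 1, cosKernel L y| ≤ 2 := by
  have hbound : ‖∫ y in Ioi 1, cosKernel L y‖ ≤ ∫ y in Ioi (1 : ℝ), 2 * y ^ (-2 : ℝ) := by
    refine norm_integral_le_of_norm_le
      ((integrableOn_Ioi_rpow_of_lt (a := -2) (by norm_num) one_pos).const_mul 2) ?_
    filter_upwards [ae_restrict_mem measurableSet_Ioi] with y hy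
    exact abs_cosKernel_le_rpow L (one_pos.trans hy)
  rwa [integral_const_mul, integral_Ioi_rpow_of_lt (by norm_num) one_pos, one_rpow,
    show (-2 : ℝ) + 1 = -1 by norm_num, neg_div_neg_eq, div_one, mul_one] at hbound

lemma cosKernel_neg (L y : ℝ) : cosKernel (-L) y = cosKernel L y := by
  rw [cosKernel, cosKernel, neg_mul, cos_neg]

lemma cosKernel_eq_sq_mul (L y : ℝ) : cosKernel L y = L ^ 2 * cosKernel 1 (L * y) := by
  rcases eq_or_ne y 0 with rfl | hy
  · simp [cosKernel]
  rcases eq_or_ne L 0 with rfl | hL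
  · simp [cosKernel]
  rw [cosKernel, cosKernel, one_mul]
  field_simp

/-- Equal to `-π/2`, a value the argument never needs. -/
noncomputable def cosKernelIntegral : ℝ := ∫ u in Ioi 0, cosKernel 1 u

lemma setIntegral_cosKernel_Ioi_zero (L : ℝ) :
    ∫ y in Ioi 0, cosKernel L y = |L| * cosKernelIntegral := by
  wlog hL : 0 ≤ L generalizing L
  · simpa [cosKernel_neg, abs_neg] using this (-L) (by linarith)
  rcases hL.eq_or_lt with rfl | hL
  · simp [cosKernel]
  simp_rw [cosKernel_eq_sq_mul L, integral_const_mul, integral_comp_mul_left_Ioi _ _ hL, mul_zero,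
    smul_eq_mul, abs_of_pos hL, cosKernelIntegral]
  field_simp

lemma abs_setIntegral_cosKernel_Ioo_sub_le (L : ℝ) :
    |(∫ y in Ioo 0 1, cosKernel L y) - |L| * cosKernelIntegral| ≤ 2 := by
  have hsplit := setIntegral_union ((Iio_disjoint_Ici le_rfl).mono_left Ioo_subset_Iio_self)
    measurableSet_Ici
    ((integrableOn_cosKernel_Ioi_zero L).mono_set Ioo_subset_Ioi_self)
    ((integrableOn_cosKernel_Ioi_zero L).mono_set (Ici_subset_Ioi.2 one_pos))
  rw [Ioo_union_Ici_eq_Ioi one_pos, setIntegral_cosKernel_Ioi_zero, integral_Ici_eq_integral_Ioi]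
    at hsplit
  rw [hsplit, sub_add_cancel_left, abs_neg]
  exact abs_setIntegral_cosKernel_Ioi_one_le L

/-- `∑_{ε ∈ {±1}³} ε₁ε₂ε₃ g(a + ε₁b + ε₂c + ε₃d)`. -/
def altSum (g : ℝ → ℝ) (a b c d : ℝ) : ℝ :=
  g (a - b - c + d) + g (a - b + c - d) + g (a + b - c - d) + g (a + b + c + d)
    - (g (a - b - c - d) + g (a - b + c + d) + g (a + b - c + d) + g (a + b + c - d))

lemma altSum_swap_bc (g : ℝ → ℝ) (a b c d : ℝ) : altSum g a c b d = altSum g a b c d := by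
  simp only [altSum]; ring_nf

lemma altSum_swap_cd (g : ℝ → ℝ) (a b c d : ℝ) : altSum g a b d c = altSum g a b c d := by
  simp only [altSum]; ring_nf

lemma abs_abs_sub_abs_le_of_sub_eq {x y t : ℝ} (h : x - y = 2 * t) :
    |(|x| - |y|)| ≤ 2 * |t| := by
  simpa [h, abs_mul] using abs_abs_sub_abs_le_abs_sub x y

lemma abs_abs_sub_abs_le_of_add_eq {x y t : ℝ} (h : x + y = 2 * t) :
    |(|x| - |y|)| ≤ 2 * |t| := by
  simpa using abs_abs_sub_abs_le_of_sub_eq (y := -y) (by linarith)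

lemma abs_altSum_abs_le_first (a b c d : ℝ) : |altSum abs a b c d| ≤ 8 * |a| := by
  have h₁ := abs_abs_sub_abs_le_of_add_eq
    (x := a - b - c + d) (y := a + b + c - d) (t := a) (by ring)
  have h₂ := abs_abs_sub_abs_le_of_add_eq
    (x := a - b + c - d) (y := a + b - c + d) (t := a) (by ring)
  have h₃ := abs_abs_sub_abs_le_of_add_eq
    (x := a + b - c - d) (y := a - b + c + d) (t := a) (by ring)
  have h₄ := abs_abs_sub_abs_le_of_add_eq
    (x := a + b + c + d) (y := a - b - c - d) (t := a) (by ring)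
  rw [abs_le] at h₁ h₂ h₃ h₄ ⊢
  constructor <;> simp only [altSum] <;> linarith

lemma abs_altSum_abs_le_second (a b c d : ℝ) : |altSum abs a b c d| ≤ 8 * |b| := by
  have h₁ := abs_abs_sub_abs_le_of_sub_eq
    (x := a + b - c + d) (y := a - b - c + d) (t := b) (by ring)
  have h₂ := abs_abs_sub_abs_le_of_sub_eq
    (x := a + b + c - d) (y := a - b + c - d) (t := b) (by ring)
  have h₃ := abs_abs_sub_abs_le_of_sub_eq
    (x := a + b - c - d) (y := a - b - c - d) (t := b) (by ring)
  have h₄ := abs_abs_sub_abs_le_of_sub_eq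
    (x := a + b + c + d) (y := a - b + c + d) (t := b) (by ring)
  rw [abs_le] at h₁ h₂ h₃ h₄ ⊢
  constructor <;> simp only [altSum] <;> linarith

lemma abs_altSum_abs_le_min (a b c d : ℝ) :
    |altSum abs a b c d| ≤ 8 * min (min |a| |b|) (min |c| |d|) := by
  have hc : |altSum abs a b c d| ≤ 8 * |c| := by
    simpa only [altSum_swap_bc] using abs_altSum_abs_le_second a c b d
  have hd : |altSum abs a b c d| ≤ 8 * |d| := by
    simpa only [altSum_swap_bc, altSum_swap_cd] using abs_altSum_abs_le_second a d b c
  simp only [mul_min_of_nonneg _ _ (by norm_num : (0 : ℝ) ≤ 8)]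
  exact le_min (le_min (abs_altSum_abs_le_first a b c d) (abs_altSum_abs_le_second a b c d))
    (le_min hc hd)

lemma abs_altSum_le {g : ℝ → ℝ} {M : ℝ} (hg : ∀ L, |g L| ≤ M) (a b c d : ℝ) :
    |altSum g a b c d| ≤ 8 * M := by
  have hg' := fun L => abs_le.1 (hg L)
  rw [abs_le]
  constructor <;> simp only [altSum] <;> linarith [hg' (a - b - c + d), hg' (a - b + c - d),
    hg' (a + b - c - d), hg' (a + b + c + d), hg' (a - b - c - d), hg' (a - b + c + d),
    hg' (a + b - c + d), hg' (a + b + c - d)]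

lemma sin_mul_sin_mul_sin_mul_sin (a b c d : ℝ) :
    sin a * sin b * sin c * sin d = altSum cos a b c d / 8 := by
  simp only [altSum, cos_add, cos_sub, sin_add, sin_sub]
  ring

lemma integral_altSum {s : Set ℝ} {F : ℝ → ℝ → ℝ} (hF : ∀ L, IntegrableOn (F L) s)
    (a b c d : ℝ) :
    ∫ y in s, altSum (F · y) a b c d = altSum (fun L => ∫ y in s, F L y) a b c d := by
  simp only [altSum]
  have h₂ (L₁ L₂ : ℝ) : IntegrableOn (fun y => F L₁ y + F L₂ y) s := (hF L₁).add (hF L₂)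
  have h₃ (L₁ L₂ L₃ : ℝ) : IntegrableOn (fun y => F L₁ y + F L₂ y + F L₃ y) s :=
    (h₂ L₁ L₂).add (hF L₃)
  have h₄ (L₁ L₂ L₃ L₄ : ℝ) : IntegrableOn (fun y => F L₁ y + F L₂ y + F L₃ y + F L₄ y) s :=
    (h₃ L₁ L₂ L₃).add (hF L₄)
  rw [integral_sub (h₄ ..) (h₄ ..), integral_add (h₃ ..) (hF _), integral_add (h₂ ..) (hF _),
    integral_add (hF _) (hF _), integral_add (h₃ ..) (hF _), integral_add (h₂ ..) (hF _),
    integral_add (hF _) (hF _)]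

noncomputable def sinCorrelation (a b c d : ℝ) : ℝ :=
  ∫ y in Ioo 0 1, sin (a * y) * sin (b * y) * sin (c * y) * sin (d * y) / y ^ 2

lemma sinCorrelation_eq_altSum (a b c d : ℝ) :
    sinCorrelation a b c d = altSum (fun L => ∫ y in Ioo 0 1, cosKernel L y) a b c d / 8 := by
  have hpoint : ∀ y ∈ Ioo (0 : ℝ) 1,
      sin (a * y) * sin (b * y) * sin (c * y) * sin (d * y) / y ^ 2
        = altSum (cosKernel · y) a b c d / 8 := by
    intro y hy
    have hy0 : y ≠ 0 := hy.1.ne'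
    rw [sin_mul_sin_mul_sin_mul_sin]
    simp only [altSum, cosKernel]
    field_simp
    ring_nf
  rw [sinCorrelation, setIntegral_congr_fun measurableSet_Ioo hpoint, integral_div,
    integral_altSum fun L => (integrableOn_cosKernel_Ioi_zero L).mono_set Ioo_subset_Ioi_self]

lemma abs_sinCorrelation_le (a b c d : ℝ) :
    |sinCorrelation a b c d| ≤ 2 + |cosKernelIntegral| * min (min |a| |b|) (min |c| |d|) := by
  set G := fun L => ∫ y in Ioo 0 1, cosKernel L y
  have hsplit : altSum G a b c d = altSum (fun L => G L - |L| * cosKernelIntegral) a b c d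
      + cosKernelIntegral * altSum abs a b c d := by
    simp only [altSum]; ring
  have herr := abs_altSum_le abs_setIntegral_cosKernel_Ioo_sub_le a b c d
  have hmain := abs_altSum_abs_le_min a b c d
  rw [sinCorrelation_eq_altSum, abs_div, abs_of_pos (by norm_num : (0 : ℝ) < 8),
    div_le_iff₀ (by norm_num), hsplit]
  calc _ ≤ _ := abs_add_le _ _
    _ ≤ 8 * 2 + |cosKernelIntegral| * (8 * min (min |a| |b|) (min |c| |d|)) := by
      rw [abs_mul]; gcongr
    _ = _ := by ring

lemma eFun_of_ne_zero (n : ℕ) {x : E3} (hx : x ≠ 0) : eFun n x = sin (n * π * ‖x‖) / ‖x‖ :=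
  if_neg hx

lemma setIntegral_B3_eFun_mul (n n₁ n₂ n₃ : ℕ) :
    ∫ x in B3, eFun n x * eFun n₁ x * eFun n₂ x * eFun n₃ x
      = 3 * volume.real B3 * sinCorrelation (n * π) (n₁ * π) (n₂ * π) (n₃ * π) := by
  set g : ℝ → ℝ := fun r =>
    sin (n * π * r) / r * (sin (n₁ * π * r) / r) * (sin (n₂ * π * r) / r) * (sin (n₃ * π * r) / r)
  have hradial : ∀ᵐ x ∂volume.restrict B3,
      eFun n x * eFun n₁ x * eFun n₂ x * eFun n₃ x = g ‖x‖ := by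
    refine ae_restrict_of_ae ?_
    filter_upwards [measure_singleton (0 : E3) |> compl_mem_ae_iff.2] with x hx
    simp only [eFun_of_ne_zero _ hx, g]
  rw [integral_congr_ae hradial, B3, setIntegral_ball_fun_norm_addHaar,
    finrank_euclideanSpace_fin, sinCorrelation, nsmul_eq_mul, smul_eq_mul, Nat.cast_ofNat,
    mul_assoc]
  congr 2
  refine setIntegral_congr_fun measurableSet_Ioo fun y hy => ?_
  have hy0 : y ≠ 0 := hy.1.ne'
  simp only [g, smul_eq_mul]
  field_simp

/-- The correlation integral `c(n,n₁,n₂,n₃) = ∫_B e_n e_{n₁} e_{n₂} e_{n₃}` satisfies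
`|c(n,n₁,n₂,n₃)| ≤ C · min{n, n₁, n₂, n₃}`. -/
theorem correlation_bound :
    ∃ C > 0, ∀ n n₁ n₂ n₃ : ℕ, 1 ≤ n → 1 ≤ n₁ → 1 ≤ n₂ → 1 ≤ n₃ →
      |∫ x in B3, eFun n x * eFun n₁ x * eFun n₂ x * eFun n₃ x| ≤
        C * (min (min n n₁) (min n₂ n₃) : ℕ) := by
  have hV : 0 < volume.real B3 :=
    ENNReal.toReal_pos (Metric.measure_ball_pos volume 0 one_pos).ne' measure_ball_lt_top.ne
  refine ⟨3 * volume.real B3 * (2 + |cosKernelIntegral| * π), by positivity,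
    fun n n₁ n₂ n₃ hn hn₁ hn₂ hn₃ => ?_⟩
  set m : ℕ := min (min n n₁) (min n₂ n₃) with hm_def
  have hm : (1 : ℝ) ≤ m := by exact_mod_cast le_min (le_min hn hn₁) (le_min hn₂ hn₃)
  have habs (k : ℕ) : |(k : ℝ) * π| = k * π := abs_of_nonneg (by positivity)
  have hmin : min (min |n * π| |n₁ * π|) (min |n₂ * π| |n₃ * π|) = m * π := by
    simp only [habs, hm_def, Nat.cast_min, min_mul_of_nonneg _ _ pi_pos.le]
  have hcorr := abs_sinCorrelation_le (n * π) (n₁ * π) (n₂ * π) (n₃ * π)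
  rw [hmin] at hcorr
  rw [setIntegral_B3_eFun_mul, abs_mul, abs_of_pos (by positivity)]
  calc _ ≤ 3 * volume.real B3 * (2 + |cosKernelIntegral| * (m * π)) := by gcongr
    _ ≤ 3 * volume.real B3 * ((2 + |cosKernelIntegral| * π) * m) := by
      gcongr; nlinarith [abs_nonneg cosKernelIntegral, pi_pos]
    _ = _ := by ring
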